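/- Let u_1^+ and v_1^+ be the numbers of arcs of a curve γ from l_1 to j_1, respectively from l_1 to k_1, in the upper half of the twice-punctured disk E'_1, with u_1^+ + v_1^+ = p_1 > 0, and let m_1, n_1, t_1 be the Dehn parameters as defined. Then γ is left-twisted in E'_1 (i.e., t_1 < 0) if and only if u_1^+ > 0. -/
import Mathlib

/-- A curve is left-twisted in `E'₁` (twisting number `t₁ < 0`) if and only if
`u₁⁺ > 0`. -/
theorem left_twisted_iff_u_pos (p1 u v w m1 n1 q1 t1 : ℤ)
    (hu : 0 ≤ u) (hv : 0 ≤ v) (hw : 0 ≤ w)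
    (hp : u + v = p1) (hp0 : 0 < p1)
    (hm : m1 = u + w) (hn : n1 = v + w)
    (hq0 : 0 ≤ q1) (hq1 : q1 < p1)
    (ht_eq : n1 - m1 = p1 → m1 = p1 * t1 + q1)
    (ht_lt : n1 - m1 < p1 → -m1 = p1 * t1 + q1) :
    t1 < 0 ↔ 0 < u := by
  rcases lt_or_eq_of_le hu with hu0 | hu0
  · -- u > 0, so n1 - m1 = v - u < p1
    have h := ht_lt (by omega)
    constructor
    · intro _; exact hu0
    · intro _
      by_contra hc
      push_neg at hc
      nlinarith [mul_nonneg hp0.le hc]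
  · -- u = 0, n1 - m1 = p1
    have h := ht_eq (by omega)
    constructor
    · intro ht
      exfalso
      nlinarith [mul_pos hp0 (by omega : 0 < -t1)]
    · intro h'; omega
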